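/- arXiv:1207.4960 — 3 statements merged into one kernel-verified Lean document; each statement's English description precedes it below -/
import Mathlib

section
/- For |x| < 1 (or as an identity of formal power series), the generating function of partitions satisfies ∏_{k=1}^∞ 1/(1-x^k) = Σ_{d=0}^∞ x^{d²} / ∏_{k=1}^d (1-x^k)². -/
/-!
Write `(x)_m = ∏_{k=1}^m (1 - x^k)` and `[m, e] = (x)_m / ((x)_e (x)_{m-e})` for the Gaussian
binomial. The q-Pascal rule and induction on `m` give the Durfee rectangle identity
`1 / (x)_{m+j} = ∑_{e ≤ m} x^{e(e+j)} [m, e] / (x)_{e+j}`. Take `j = 0`, `m = n + 1`: since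
`(x)_{n+1} ≡ (x)_{n+1-e}` modulo `x^{n+2-e}`, the factor `[n+1, e]` may be replaced by
`1 / (x)_e`, and the error, multiplied by `x^{e²}`, only affects degrees `> n`.
-/

open PowerSeries Finset

noncomputable def qPochhammer (K : Type*) [Field K] (m : ℕ) : K⟦X⟧ :=
  ∏ k ∈ range m, (1 - X ^ (k + 1))

/-- Set to `0` for `d > m`, so that the q-Pascal rule `gaussBinom_succ_succ` holds for all
`m`, `d`. -/
noncomputable def gaussBinom (K : Type*) [Field K] (m d : ℕ) : K⟦X⟧ :=
  if d ≤ m then qPochhammer K m * (qPochhammer K d)⁻¹ * (qPochhammer K (m - d))⁻¹ else 0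

variable {K : Type*} [Field K]

lemma constantCoeff_qPochhammer (m : ℕ) : constantCoeff (qPochhammer K m) = 1 := by
  simp [qPochhammer, map_prod]

lemma qPochhammer_mul_inv (m : ℕ) : qPochhammer K m * (qPochhammer K m)⁻¹ = 1 :=
  PowerSeries.mul_inv_cancel _ (by simp [constantCoeff_qPochhammer])

lemma qPochhammer_succ (m : ℕ) :
    qPochhammer K (m + 1) = qPochhammer K m * (1 - X ^ (m + 1)) :=
  prod_range_succ _ _

lemma inv_qPochhammer (m : ℕ) :
    (qPochhammer K m)⁻¹ = ∏ k ∈ range m, (1 - (X : K⟦X⟧) ^ (k + 1))⁻¹ := by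
  induction m with
  | zero => simp [qPochhammer]
  | succ m ih => rw [qPochhammer_succ, PowerSeries.mul_inv_rev, prod_range_succ, ih, mul_comm]

lemma inv_qPochhammer_eq_mul_inv_qPochhammer_succ (m : ℕ) :
    (qPochhammer K m)⁻¹ = (1 - X ^ (m + 1)) * (qPochhammer K (m + 1))⁻¹ := by
  rw [qPochhammer_succ, PowerSeries.mul_inv_rev, ← mul_assoc,
    PowerSeries.mul_inv_cancel _ (by simp), one_mul]

lemma X_pow_dvd_qPochhammer_add_sub (c e : ℕ) :
    (X : K⟦X⟧) ^ (c + 1) ∣ qPochhammer K (c + e) - qPochhammer K c := by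
  induction e with
  | zero => simp
  | succ e ih =>
    have h : qPochhammer K (c + (e + 1)) - qPochhammer K c =
        (qPochhammer K (c + e) - qPochhammer K c) -
          X ^ (c + 1) * X ^ e * qPochhammer K (c + e) := by
      rw [← add_assoc, qPochhammer_succ, ← pow_add, add_right_comm]; ring
    rw [h]
    exact dvd_sub ih (dvd_mul_of_dvd_left (dvd_mul_right _ _) _)

lemma gaussBinom_zero_right (m : ℕ) : gaussBinom K m 0 = 1 := by
  simp [gaussBinom, qPochhammer]

lemma gaussBinom_self (m : ℕ) : gaussBinom K m m = 1 := by
  simp [gaussBinom, qPochhammer]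

lemma gaussBinom_of_lt {m d : ℕ} (h : m < d) : gaussBinom K m d = 0 := by
  simp [gaussBinom, h.not_ge]

lemma gaussBinom_succ_succ (m d : ℕ) :
    gaussBinom K (m + 1) (d + 1) = gaussBinom K m (d + 1) + X ^ (m - d) * gaussBinom K m d := by
  rcases lt_trichotomy d m with hdm | rfl | hmd
  · obtain ⟨c, rfl⟩ := Nat.exists_eq_add_of_lt hdm
    have hX : (X : K⟦X⟧) ^ (d + c + 1 + 1) = X ^ (d + 1) * X ^ (c + 1) := by
      rw [← pow_add]; ring_nf
    simp only [gaussBinom, if_pos (by omega : d + 1 ≤ d + c + 1 + 1),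
      if_pos (by omega : d + 1 ≤ d + c + 1),
      if_pos (by omega : d ≤ d + c + 1), show d + c + 1 + 1 - (d + 1) = c + 1 by omega,
      show d + c + 1 - (d + 1) = c by omega, show d + c + 1 - d = c + 1 by omega]
    rw [qPochhammer_succ, hX, inv_qPochhammer_eq_mul_inv_qPochhammer_succ d,
      inv_qPochhammer_eq_mul_inv_qPochhammer_succ c]
    ring
  · simp [gaussBinom_self, gaussBinom_of_lt]
  · simp [gaussBinom_of_lt, hmd, Nat.lt_succ_of_lt hmd]

lemma X_pow_dvd_gaussBinom_sub {m e : ℕ} (h : e ≤ m) :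
    (X : K⟦X⟧) ^ (m - e + 1) ∣ gaussBinom K m e - (qPochhammer K e)⁻¹ := by
  have hfactor : gaussBinom K m e - (qPochhammer K e)⁻¹ =
      (qPochhammer K (m - e + e) - qPochhammer K (m - e)) *
        ((qPochhammer K e)⁻¹ * (qPochhammer K (m - e))⁻¹) := by
    rw [Nat.sub_add_cancel h, gaussBinom, if_pos h]
    linear_combination (qPochhammer K e)⁻¹ * qPochhammer_mul_inv (K := K) (m - e)
  rw [hfactor]
  exact dvd_mul_of_dvd_left (X_pow_dvd_qPochhammer_add_sub _ _) _

/-- Classify the partitions with parts `≤ m + j` by their largest `e × (e + j)` rectangle. -/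
lemma inv_qPochhammer_add_eq_sum (m j : ℕ) :
    (qPochhammer K (m + j))⁻¹ =
      ∑ e ∈ range (m + 1),
        X ^ (e * (e + j)) * gaussBinom K m e * (qPochhammer K (e + j))⁻¹ := by
  induction m generalizing j with
  | zero => simp [gaussBinom_zero_right]
  | succ m ih =>
    have hterm : ∀ e ∈ range (m + 1),
        X ^ ((e + 1) * (e + 1 + j)) * gaussBinom K (m + 1) (e + 1) *
            (qPochhammer K (e + 1 + j))⁻¹ =
          X ^ ((e + 1) * (e + 1 + j)) * gaussBinom K m (e + 1) * (qPochhammer K (e + 1 + j))⁻¹ +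
          X ^ (m + j + 1) *
            (X ^ (e * (e + (j + 1))) * gaussBinom K m e * (qPochhammer K (e + (j + 1)))⁻¹) := by
      intro e he
      obtain ⟨c, rfl⟩ := Nat.exists_eq_add_of_le (Nat.le_of_lt_succ (mem_range.1 he))
      rw [gaussBinom_succ_succ, Nat.add_sub_cancel_left, show e + (j + 1) = e + 1 + j by omega]
      have hexp : (X : K⟦X⟧) ^ ((e + 1) * (e + 1 + j)) * X ^ c =
          X ^ (e + c + j + 1) * X ^ (e * (e + 1 + j)) := by
        rw [← pow_add, ← pow_add]; ring_nf
      linear_combination gaussBinom K (e + c) e * (qPochhammer K (e + 1 + j))⁻¹ * hexp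
    calc (qPochhammer K (m + 1 + j))⁻¹
        = (qPochhammer K (m + j))⁻¹ + X ^ (m + j + 1) * (qPochhammer K (m + (j + 1)))⁻¹ := by
          rw [inv_qPochhammer_eq_mul_inv_qPochhammer_succ (m + j), add_right_comm, ← add_assoc]
          ring
      _ = ∑ e ∈ range (m + 2),
            X ^ (e * (e + j)) * gaussBinom K m e * (qPochhammer K (e + j))⁻¹ +
          X ^ (m + j + 1) * ∑ e ∈ range (m + 1),
            X ^ (e * (e + (j + 1))) * gaussBinom K m e * (qPochhammer K (e + (j + 1)))⁻¹ := by
          rw [ih j, ih (j + 1), sum_range_succ _ (m + 1), gaussBinom_of_lt (lt_add_one m)]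
          simp
      _ = _ := by
          rw [sum_range_succ' _ (m + 1), sum_range_succ' _ (m + 1), sum_congr rfl hterm,
            sum_add_distrib, mul_sum, gaussBinom_zero_right, gaussBinom_zero_right]
          ring

lemma X_pow_dvd_durfee_term_sub {n d : ℕ} (hd : d ≤ n + 1) :
    (X : K⟦X⟧) ^ (n + 1) ∣ X ^ (d * d) * gaussBinom K (n + 1) d * (qPochhammer K d)⁻¹ -
      X ^ (d ^ 2) * ((qPochhammer K d)⁻¹) ^ 2 := by
  have hexp : n + 1 ≤ d * d + (n + 1 - d + 1) := by have := Nat.le_mul_self d; omega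
  have hfactor : X ^ (d * d) * gaussBinom K (n + 1) d * (qPochhammer K d)⁻¹ -
      X ^ (d ^ 2) * ((qPochhammer K d)⁻¹) ^ 2 =
      X ^ (d * d) * (gaussBinom K (n + 1) d - (qPochhammer K d)⁻¹) * (qPochhammer K d)⁻¹ := by
    ring
  rw [hfactor]
  calc (X : K⟦X⟧) ^ (n + 1) ∣ X ^ (d * d) * X ^ (n + 1 - d + 1) :=
        pow_add (X : K⟦X⟧) _ _ ▸ pow_dvd_pow X hexp
    _ ∣ X ^ (d * d) * (gaussBinom K (n + 1) d - (qPochhammer K d)⁻¹) :=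
      mul_dvd_mul_left _ (X_pow_dvd_gaussBinom_sub hd)
    _ ∣ _ := dvd_mul_right _ _

lemma X_pow_succ_dvd_inv_qPochhammer_sub_sum (n : ℕ) :
    (X : K⟦X⟧) ^ (n + 1) ∣ (qPochhammer K (n + 1))⁻¹ -
      ∑ d ∈ range (n + 1), X ^ (d ^ 2) * ((qPochhammer K d)⁻¹) ^ 2 := by
  have hrect := inv_qPochhammer_add_eq_sum (K := K) (n + 1) 0
  simp only [add_zero] at hrect
  rw [hrect, sum_range_succ, add_sub_right_comm, ← sum_sub_distrib]
  refine dvd_add (dvd_sum fun d hd => X_pow_dvd_durfee_term_sub (mem_range.1 hd).le) ?_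
  exact dvd_mul_of_dvd_left (dvd_mul_of_dvd_left (pow_dvd_pow X (Nat.le_mul_self _)) _) _

theorem durfee_square_identity (n : ℕ) :
    (PowerSeries.coeff (R := ℚ) n)
        (∏ k ∈ Finset.range (n + 1), (1 - (PowerSeries.X : PowerSeries ℚ) ^ (k + 1))⁻¹) =
      (PowerSeries.coeff (R := ℚ) n)
        (∑ d ∈ Finset.range (n + 1),
          (PowerSeries.X : PowerSeries ℚ) ^ (d ^ 2) *
            (∏ k ∈ Finset.range d, (1 - (PowerSeries.X : PowerSeries ℚ) ^ (k + 1))⁻¹) ^ 2) := by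
  simp_rw [← inv_qPochhammer]
  rw [← sub_eq_zero, ← map_sub]
  exact X_pow_dvd_iff.1 (X_pow_succ_dvd_inv_qPochhammer_sub_sum n) n (lt_add_one n)
end

section
/- Over a field of characteristic 2, in a connected, commutative, cocommutative graded Hopf algebra, every primitive element of odd degree is indecomposable. -/
/-!
Let `E` be the Euler derivation `a ↦ (deg a) • a`, `σ = μ ∘ Δ` and `Φ = μ ∘ (E ⊗ id) ∘ Δ`.
Since `A` is commutative, `Φ` is a `σ`-derivation, `Φ (a * b) = σ a * Φ b + Φ a * σ b`, and on a
primitive `x` of odd degree `n` it is `n • x = x`. In characteristic two, cocommutativity makes the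
off-diagonal parts of `Δ a` cancel in pairs under `μ`, so `σ ^ K` kills every homogeneous element
whose degree is not divisible by `2 ^ K`; in particular `σ` kills odd degrees. A decomposable `x`
is a sum of products `c * a` with `deg c` odd and `deg a > 0`, and
`Φ (c * σ ^ K a) = Φ c * σ ^ (K + 1) a`. Hence `x = Φ ^ K x` is a sum of products `Φ ^ K c * σ ^ K a`, all of which vanish once `2 ^ K > n`.
-/

open TensorProduct DirectSum

section Euler

variable {R A : Type*} [CommRing R] [CommRing A] [Algebra R A]
  (𝒜 : ℕ → Submodule R A) [GradedAlgebra 𝒜]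

noncomputable def eulerOp : A →ₗ[R] A :=
  toModule R ℕ A (fun i => (i : R) • (𝒜 i).subtype) ∘ₗ (decomposeLinearEquiv 𝒜).toLinearMap

variable {𝒜}

lemma eulerOp_of_mem {i : ℕ} {a : A} (ha : a ∈ 𝒜 i) : eulerOp 𝒜 a = (i : R) • a := by
  lift a to 𝒜 i using ha
  simp only [eulerOp, LinearMap.comp_apply, LinearEquiv.coe_coe, decomposeLinearEquiv_apply,
    decompose_coe, ← lof_eq_of R, toModule_lof]
  rfl

lemma eulerOp_one : eulerOp 𝒜 (1 : A) = 0 := by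
  simp [eulerOp_of_mem (SetLike.one_mem_graded 𝒜)]

variable (𝒜) in
lemma eulerOp_mul (a b : A) : eulerOp 𝒜 (a * b) = eulerOp 𝒜 a * b + a * eulerOp 𝒜 b := by
  induction a using Decomposition.inductionOn 𝒜 generalizing b with
  | zero => simp
  | add a a' ha ha' => simp only [add_mul, map_add, ha, ha']; ring
  | homogeneous a =>
    induction b using Decomposition.inductionOn 𝒜 with
    | zero => simp
    | add b b' hb hb' => simp only [mul_add, map_add, hb, hb']; ring
    | homogeneous b =>
      rw [eulerOp_of_mem (SetLike.mul_mem_graded a.2 b.2), eulerOp_of_mem a.2,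
        eulerOp_of_mem b.2, Nat.cast_add, add_smul, smul_mul_assoc, mul_smul_comm]

end Euler

section Comultiplication

variable {R A : Type*} [CommRing R] [CommRing A] [Algebra R A]
  (𝒜 : ℕ → Submodule R A) [GradedAlgebra 𝒜] (Δ : A →ₐ[R] A ⊗[R] A)

noncomputable def tensorGrading (n : ℕ) : Submodule R (A ⊗[R] A) :=
  ⨆ p : {p : ℕ × ℕ // p.1 + p.2 = n}, Submodule.map₂ (mk R A A) (𝒜 p.1.1) (𝒜 p.1.2)

noncomputable def mulComul : A →ₐ[R] A := (Algebra.TensorProduct.lmul' R).comp Δ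

noncomputable def comulEuler : A →ₗ[R] A :=
  LinearMap.mul' R A ∘ₗ map (eulerOp 𝒜) LinearMap.id ∘ₗ Δ.toLinearMap

lemma comulEuler_mul (a b : A) :
    comulEuler 𝒜 Δ (a * b) =
      mulComul Δ a * comulEuler 𝒜 Δ b + comulEuler 𝒜 Δ a * mulComul Δ b := by
  simp only [comulEuler, mulComul, LinearMap.comp_apply, AlgHom.toLinearMap_apply,
    AlgHom.comp_apply, map_mul]
  induction Δ a using TensorProduct.induction_on generalizing b with
  | zero => simp
  | add u u' hu hu' => simp only [add_mul, map_add, hu, hu']; ring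
  | tmul a₁ a₂ =>
    induction Δ b using TensorProduct.induction_on with
    | zero => simp
    | add v v' hv hv' => simp only [mul_add, map_add, hv, hv']; ring
    | tmul b₁ b₂ =>
      simp only [Algebra.TensorProduct.tmul_mul_tmul, map_tmul, LinearMap.mul'_apply,
        Algebra.TensorProduct.lmul'_apply_tmul, LinearMap.id_apply, eulerOp_mul]
      ring

variable {𝒜 Δ}

lemma comulEuler_mem (hΔ : ∀ n, ∀ a ∈ 𝒜 n, Δ a ∈ tensorGrading 𝒜 n) {n : ℕ} {a : A}
    (ha : a ∈ 𝒜 n) : comulEuler 𝒜 Δ a ∈ 𝒜 n := by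
  suffices tensorGrading 𝒜 n ≤ (𝒜 n).comap (LinearMap.mul' R A ∘ₗ map (eulerOp 𝒜) LinearMap.id) from
    this (hΔ n a ha)
  refine iSup_le fun ⟨⟨p, q⟩, hpq⟩ => Submodule.map₂_le.2 fun b hb c hc => ?_
  simp only [Submodule.mem_comap, LinearMap.comp_apply, mk_apply, map_tmul, LinearMap.mul'_apply,
    LinearMap.id_apply, eulerOp_of_mem hb, smul_mul_assoc]
  exact Submodule.smul_mem _ _ (hpq ▸ SetLike.mul_mem_graded hb hc)

lemma comulEuler_of_primitive [CharP R 2] {n : ℕ} (hn : Odd n) {x : A} (hx : x ∈ 𝒜 n)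
    (hprim : Δ x = x ⊗ₜ[R] 1 + 1 ⊗ₜ[R] x) : comulEuler 𝒜 Δ x = x := by
  simp [comulEuler, hprim, eulerOp_of_mem hx, eulerOp_one,
    natCast_eq_one_of_odd_of_two_eq_zero hn CharTwo.two_eq_zero]

end Comultiplication

section Symmetric

open Finset.HasAntidiagonal

variable {R A : Type*} [CommRing R] [CommRing A] [Algebra R A]
  {𝒜 : ℕ → Submodule R A} [GradedAlgebra 𝒜]

variable (𝒜) in
noncomputable def projTensor (p q : ℕ) : A ⊗[R] A →ₗ[R] A ⊗[R] A :=
  map (GradedAlgebra.proj 𝒜 p) (GradedAlgebra.proj 𝒜 q)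

lemma comm_projTensor (p q : ℕ) (u : A ⊗[R] A) :
    TensorProduct.comm R A A (projTensor 𝒜 p q u) =
      projTensor 𝒜 q p (TensorProduct.comm R A A u) :=
  (map_comm _ _ u).symm

lemma sum_antidiagonal_projTensor {m : ℕ} {u : A ⊗[R] A} (hu : u ∈ tensorGrading 𝒜 m) :
    ∑ pq ∈ antidiagonal m, projTensor 𝒜 pq.1 pq.2 u = u := by
  suffices tensorGrading 𝒜 m ≤
      LinearMap.eqLocus (∑ pq ∈ antidiagonal m, projTensor 𝒜 pq.1 pq.2) LinearMap.id by
    simpa using this hu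
  refine iSup_le fun ⟨⟨p, q⟩, hpq⟩ => Submodule.map₂_le.2 fun a ha b hb => ?_
  rw [LinearMap.mem_eqLocus, mk_apply, LinearMap.sum_apply,
    Finset.sum_eq_single_of_mem (p, q) (mem_antidiagonal.2 hpq)]
  · simp [projTensor, GradedAlgebra.proj_apply, decompose_of_mem_same 𝒜 ha,
      decompose_of_mem_same 𝒜 hb]
  · rintro ⟨p', q'⟩ hpq' hne
    have hp : p ≠ p' := fun h => hne (by simp_all [mem_antidiagonal]; omega)
    simp [projTensor, GradedAlgebra.proj_apply, decompose_of_mem_ne 𝒜 ha hp]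

lemma map_eq_zero_of_comm_eq_self [CharP R 2] {M : Type*} [AddCommGroup M] [Module R M]
    (g : A ⊗[R] A →ₗ[R] M) (hg : ∀ u, g (TensorProduct.comm R A A u) = g u) {m : ℕ}
    {u : A ⊗[R] A} (hu : u ∈ tensorGrading 𝒜 m) (hsymm : TensorProduct.comm R A A u = u)
    (hdiag : ∀ s, s + s = m → ∀ a ∈ 𝒜 s, ∀ b ∈ 𝒜 s, g (a ⊗ₜ b) = 0) : g u = 0 := by
  have hswap (p q : ℕ) : g (projTensor 𝒜 q p u) = g (projTensor 𝒜 p q u) := by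
    rw [← hg, comm_projTensor, hsymm]
  rw [← sum_antidiagonal_projTensor hu, map_sum]
  refine Finset.sum_involution (fun pq _ => pq.swap) (fun pq _ => ?_) (fun pq hpq hne hfix => ?_)
    (fun pq hpq => swap_mem_antidiagonal.2 hpq) (fun pq _ => pq.swap_swap)
  · rw [Prod.fst_swap, Prod.snd_swap, hswap, ← two_smul R, CharTwo.two_eq_zero, zero_smul]
  · obtain ⟨s, t⟩ := pq
    obtain rfl : s = t := congrArg Prod.snd hfix
    have hker : g ∘ₗ projTensor 𝒜 s s = 0 := TensorProduct.ext' fun a b =>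
      hdiag s (mem_antidiagonal.1 hpq) _ (SetLike.coe_mem _) _ (SetLike.coe_mem _)
    exact hne (LinearMap.congr_fun hker u)

end Symmetric

section Main

variable {R A : Type*} [CommRing R] [CommRing A] [Algebra R A]
  {𝒜 : ℕ → Submodule R A} [GradedAlgebra 𝒜] {Δ : A →ₐ[R] A ⊗[R] A}

lemma mulComul_pow_apply_eq_zero [CharP R 2] (hΔ : ∀ n, ∀ a ∈ 𝒜 n, Δ a ∈ tensorGrading 𝒜 n)
    (hcocomm : ∀ a, TensorProduct.comm R A A (Δ a) = Δ a) (K : ℕ) {i : ℕ} (hi : ¬ 2 ^ K ∣ i)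
    {a : A} (ha : a ∈ 𝒜 i) : (mulComul Δ ^ K) a = 0 := by
  induction K generalizing i a with
  | zero => simp at hi
  | succ K ih =>
    rw [pow_succ, AlgHom.mul_apply]
    refine map_eq_zero_of_comm_eq_self ((mulComul Δ ^ K).toLinearMap ∘ₗ LinearMap.mul' R A)
      (fun u => by simp [LinearMap.mul'_comm]) (hΔ i a ha) (hcocomm a) fun s hs b hb c hc => ?_
    have hs' : ¬ 2 ^ K ∣ s := fun h =>
      hi (by rw [← hs, ← two_mul, pow_succ']; exact mul_dvd_mul_left 2 h)
    rw [LinearMap.comp_apply, LinearMap.mul'_apply, AlgHom.toLinearMap_apply, map_mul, ih hs' hb,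
      zero_mul]

variable (𝒜 Δ) in
noncomputable def oddMulPowSpan (n K : ℕ) : Submodule R A :=
  Submodule.span R {y | ∃ i j a c, 0 < i ∧ Odd j ∧ i + j = n ∧ a ∈ 𝒜 i ∧ c ∈ 𝒜 j ∧
    c * (mulComul Δ ^ K) a = y}

lemma mem_oddMulPowSpan_zero {n : ℕ} (hn : Odd n) {x : A} (hx : x ∈ 𝒜 n)
    (hdec : x ∈ (⨆ i : {i : ℕ // 0 < i}, 𝒜 i) * (⨆ i : {i : ℕ // 0 < i}, 𝒜 i)) :
    x ∈ oddMulPowSpan 𝒜 Δ n 0 := by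
  suffices (⨆ i : {i : ℕ // 0 < i}, 𝒜 i) * (⨆ i : {i : ℕ // 0 < i}, 𝒜 i) ≤
      (oddMulPowSpan 𝒜 Δ n 0).comap (GradedAlgebra.proj 𝒜 n) by
    simpa [GradedAlgebra.proj_apply, decompose_of_mem_same 𝒜 hx] using this hdec
  simp only [Submodule.iSup_mul, Submodule.mul_iSup, iSup_le_iff, Submodule.mul_le]
  intro ⟨j, hj⟩ ⟨i, hi⟩ a ha b hb
  have hab := SetLike.mul_mem_graded ha hb
  rw [Submodule.mem_comap, GradedAlgebra.proj_apply]
  by_cases hij : i + j = n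
  · rw [decompose_of_mem_same 𝒜 (hij ▸ hab)]
    refine Submodule.subset_span ?_
    have hsum : Odd (i + j) := hij ▸ hn
    rcases Nat.even_or_odd j with hj' | hj'
    · exact ⟨j, i, b, a, hj, (Nat.odd_add.1 hsum).2 hj', by omega, hb, ha, by simp⟩
    · exact ⟨i, j, a, b, hi, hj', hij, ha, hb, by simp [mul_comm]⟩
  · rw [decompose_of_mem_ne 𝒜 hab hij]
    exact zero_mem _

lemma oddMulPowSpan_le_comap_comulEuler [CharP R 2]
    (hΔ : ∀ n, ∀ a ∈ 𝒜 n, Δ a ∈ tensorGrading 𝒜 n)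
    (hcocomm : ∀ a, TensorProduct.comm R A A (Δ a) = Δ a) (n K : ℕ) :
    oddMulPowSpan 𝒜 Δ n K ≤ (oddMulPowSpan 𝒜 Δ n (K + 1)).comap (comulEuler 𝒜 Δ) := by
  refine Submodule.span_le.2 ?_
  rintro _ ⟨i, j, a, c, hi, hj, hij, ha, hc, rfl⟩
  have hσc : mulComul Δ c = 0 := by
    simpa using mulComul_pow_apply_eq_zero hΔ hcocomm 1 (by simpa using hj.not_two_dvd_nat) hc
  refine Submodule.subset_span
    ⟨i, j, a, comulEuler 𝒜 Δ c, hi, hj, hij, ha, comulEuler_mem hΔ hc, ?_⟩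
  rw [comulEuler_mul, hσc, zero_mul, zero_add, pow_succ', AlgHom.mul_apply]

lemma oddMulPowSpan_eq_bot [CharP R 2] (hΔ : ∀ n, ∀ a ∈ 𝒜 n, Δ a ∈ tensorGrading 𝒜 n)
    (hcocomm : ∀ a, TensorProduct.comm R A A (Δ a) = Δ a) {n K : ℕ} (hnK : n < 2 ^ K) :
    oddMulPowSpan 𝒜 Δ n K = ⊥ := by
  refine Submodule.span_eq_bot.2 ?_
  rintro _ ⟨i, j, a, c, hi, -, hij, ha, -, rfl⟩
  rw [mulComul_pow_apply_eq_zero hΔ hcocomm K (fun h => by have := Nat.le_of_dvd hi h; omega) ha,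
    mul_zero]

end Main

theorem odd_primitive_indecomposable_char_two_general
    (k : Type*) [Field k] [CharP k 2] (A : Type*) [CommRing A] [Algebra k A]
    (𝒜 : ℕ → Submodule k A) [GradedAlgebra 𝒜]
    -- Hopf structure: comultiplication and counit
    (Δ : A →ₐ[k] TensorProduct k A A)
    -- the comultiplication is graded (preserves total degree)
    (hgraded : ∀ n, ∀ x ∈ 𝒜 n, Δ x ∈
      ⨆ p : {p : ℕ × ℕ // p.1 + p.2 = n}, Submodule.map₂ (TensorProduct.mk k A A)
        (𝒜 p.1.1) (𝒜 p.1.2))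
    -- cocommutative
    (hcocomm : ∀ x : A, (TensorProduct.comm k A A) (Δ x) = Δ x)
    -- a non-zero primitive element of odd degree
    (n : ℕ) (hn : Odd n) (x : A) (hx : x ∈ 𝒜 n) (hx0 : x ≠ 0)
    (hprim : Δ x = x ⊗ₜ[k] (1 : A) + (1 : A) ⊗ₜ[k] x) :
    x ∉ (⨆ i : {i : ℕ // 0 < i}, 𝒜 i) * (⨆ i : {i : ℕ // 0 < i}, 𝒜 i) := by
  intro hdec
  have hfix : comulEuler 𝒜 Δ x = x := comulEuler_of_primitive hn hx hprim
  have hmem (K : ℕ) : x ∈ oddMulPowSpan 𝒜 Δ n K := by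
    induction K with
    | zero => exact mem_oddMulPowSpan_zero hn hx hdec
    | succ K ih => simpa [hfix] using oddMulPowSpan_le_comap_comulEuler hgraded hcocomm n K ih
  exact hx0 (by simpa [oddMulPowSpan_eq_bot hgraded hcocomm n.lt_two_pow_self] using hmem n)

theorem odd_primitive_indecomposable_char_two
    (k : Type*) [Field k] [CharP k 2] (A : Type*) [CommRing A] [Algebra k A]
    (𝒜 : ℕ → Submodule k A) [GradedAlgebra 𝒜]
    -- connected: A⁰ = k
    (hconn : 𝒜 0 = Submodule.span k {(1 : A)})
    -- Hopf structure: comultiplication and counit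
    (Δ : A →ₐ[k] TensorProduct k A A) (ε : A →ₐ[k] k)
    (hcounit_l : ∀ x : A,
      (TensorProduct.lid k A) ((TensorProduct.map ε.toLinearMap LinearMap.id) (Δ x)) = x)
    (hcounit_r : ∀ x : A,
      (TensorProduct.rid k A) ((TensorProduct.map LinearMap.id ε.toLinearMap) (Δ x)) = x)
    -- the comultiplication is graded (preserves total degree)
    (hgraded : ∀ n, ∀ x ∈ 𝒜 n, Δ x ∈
      ⨆ p : {p : ℕ × ℕ // p.1 + p.2 = n}, Submodule.map₂ (TensorProduct.mk k A A)
        (𝒜 p.1.1) (𝒜 p.1.2))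
    -- cocommutative
    (hcocomm : ∀ x : A, (TensorProduct.comm k A A) (Δ x) = Δ x)
    -- a non-zero primitive element of odd degree
    (n : ℕ) (hn : Odd n) (x : A) (hx : x ∈ 𝒜 n) (hx0 : x ≠ 0)
    (hprim : Δ x = x ⊗ₜ[k] (1 : A) + (1 : A) ⊗ₜ[k] x) :
    x ∉ (⨆ i : {i : ℕ // 0 < i}, 𝒜 i) * (⨆ i : {i : ℕ // 0 < i}, 𝒜 i) :=
  odd_primitive_indecomposable_char_two_general k A 𝒜 Δ hgraded hcocomm n hn x hx hx0 hprim
end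

section
/- For the Grothendieck stratification of holomorphic structures on a trivial rank-r bundle over ℂP¹: if integers k₁ ≥ k₂ ≥ … ≥ k_r with k₁ + ⋯ + k_r = 0 include some k_i with |k_i| ≥ 2, then the codimension index 2·Σ_{(i,j): k_i > k_j} (k_i − k_j − 1) is strictly greater than r. -/
/-!
Only one row of the double sum is needed. If `M = max k ≥ 2` is attained at `a`, the row of `a`
is `Σ_j (M - k_j) - #{j | k_j < M} ≥ r M - (r - 1) > r`, because `Σ_j k_j = 0` and `k_a = M` is
not counted. If instead `min k ≤ -2`, the same argument applies to `-k`, whose double sum is the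
same after swapping the two coordinates of each pair.
-/

open Finset

variable {ι : Type*} [Fintype ι]

theorem card_lt_sum_gap_of_forall_le {f : ι → ℤ} (hsum : ∑ i, f i = 0) {a : ι}
    (hmax : ∀ j, f j ≤ f a) (ha : 2 ≤ f a) :
    (Fintype.card ι : ℤ) < ∑ j with f j < f a, (f a - f j - 1) := by
  have hrow : ∑ j with f j < f a, (f a - f j - 1)
      = Fintype.card ι * f a - #{j | f j < f a} := by
    have hterm : ∀ j, (if f j < f a then f a - f j - 1 else 0)
        = f a - f j - (if f j < f a then 1 else 0) := fun j => by
      split_ifs with h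
      · rfl
      · rw [le_antisymm (hmax j) (not_lt.1 h)]; ring
    rw [sum_filter, Fintype.sum_congr _ _ hterm, sum_sub_distrib, sum_sub_distrib, hsum,
      sum_boole, sum_const, card_univ, nsmul_eq_mul]
    ring
  have hcount : #{j | f j < f a} + 1 ≤ Fintype.card ι := by
    rw [← card_univ]
    exact card_lt_card ⟨subset_univ _, fun h => lt_irrefl _ (mem_filter.1 (h (mem_univ a))).2⟩
  have hcard_pos : (0 : ℤ) < Fintype.card ι := by omega
  rw [hrow]
  nlinarith

theorem sum_gap_row_le_sum_gap (f : ι → ℤ) (a : ι) :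
    ∑ j with f j < f a, (f a - f j - 1)
      ≤ ∑ p : ι × ι with f p.2 < f p.1, (f p.1 - f p.2 - 1) := by
  rw [sum_filter, sum_filter, Fintype.sum_prod_type]
  refine single_le_sum (f := fun i => ∑ j, if f j < f i then f i - f j - 1 else 0)
    (fun i _ => sum_nonneg fun j _ => ?_) (mem_univ a)
  split_ifs <;> omega

theorem sum_gap_neg (f : ι → ℤ) :
    ∑ p : ι × ι with -f p.2 < -f p.1, (-f p.1 - -f p.2 - 1)
      = ∑ p : ι × ι with f p.2 < f p.1, (f p.1 - f p.2 - 1) := by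
  rw [sum_filter, sum_filter]
  refine Fintype.sum_equiv (Equiv.prodComm ι ι) _ _ fun p => ?_
  simp only [Equiv.prodComm_apply, Prod.fst_swap, Prod.snd_swap, neg_lt_neg_iff]
  by_cases h : f p.1 < f p.2
  · simp only [h, if_true]; ring
  · simp only [h, if_false]

theorem card_lt_sum_gap_of_exists_two_le {f : ι → ℤ} (hsum : ∑ i, f i = 0)
    (hbig : ∃ i, 2 ≤ f i) :
    (Fintype.card ι : ℤ) < ∑ p : ι × ι with f p.2 < f p.1, (f p.1 - f p.2 - 1) := by
  obtain ⟨i, hi⟩ := hbig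
  obtain ⟨a, -, hmax⟩ := exists_max_image univ f ⟨i, mem_univ i⟩
  exact (card_lt_sum_gap_of_forall_le hsum (fun j => hmax j (mem_univ j))
    (hi.trans (hmax i (mem_univ i)))).trans_le (sum_gap_row_le_sum_gap f a)

theorem card_lt_sum_gap_of_exists_two_le_abs {f : ι → ℤ} (hsum : ∑ i, f i = 0)
    (hbig : ∃ i, 2 ≤ |f i|) :
    (Fintype.card ι : ℤ) < ∑ p : ι × ι with f p.2 < f p.1, (f p.1 - f p.2 - 1) := by
  obtain ⟨i, hi⟩ := hbig
  rcases le_abs'.1 hi with hneg | hpos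
  · rw [← sum_gap_neg]
    refine card_lt_sum_gap_of_exists_two_le (f := fun i => -f i) ?_ ⟨i, by omega⟩
    rw [sum_neg_distrib, hsum, neg_zero]
  · exact card_lt_sum_gap_of_exists_two_le hsum ⟨i, hpos⟩

theorem cp1_stratum_codimension_bound_general
    (r : ℕ) (k : Fin r → ℤ)
    (hsum : ∑ i : Fin r, k i = 0)
    (hbig : ∃ i : Fin r, 2 ≤ |k i|) :
    (r : ℤ) < 2 * ∑ p ∈ Finset.univ.filter (fun p : Fin r × Fin r => k p.2 < k p.1),
        (k p.1 - k p.2 - 1) := by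
  have h := card_lt_sum_gap_of_exists_two_le_abs hsum hbig
  rw [Fintype.card_fin] at h
  omega

theorem cp1_stratum_codimension_bound
    (r : ℕ) (k : Fin r → ℤ)
    (hmono : ∀ i j : Fin r, i ≤ j → k j ≤ k i)
    (hsum : ∑ i : Fin r, k i = 0)
    (hbig : ∃ i : Fin r, 2 ≤ |k i|) :
    (r : ℤ) < 2 * ∑ p ∈ Finset.univ.filter (fun p : Fin r × Fin r => k p.2 < k p.1),
        (k p.1 - k p.2 - 1) :=
  cp1_stratum_codimension_bound_general r k hsum hbig
end
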